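/- Let S be a ℂ-submodule of (m × n → ℂ) and suppose there exists a nonzero matrix T supported on S with trB T = 0. Then every Q in the intrinsic interior (intrinsicInterior over ℝ) of the convex set D_B(S) = {trB ρ | ρ a density matrix supported on S} has non-unique pre-images: there exist density matrices ρ1 ≠ ρ2 supported on S with trB ρ1 = trB ρ2 = Q, and moreover ρ1, ρ2 can be chosen with rank strictly less than dim S. -/

import Mathlib

/-!
Let `P` be the orthogonal projection onto `S`. Mixing a preimage of a point of `DB S` with the
maximally mixed state `P / dim S` gives a preimage that is positive definite on `S`. Since `Q`
lies in the intrinsic interior, it is a proper mixture of `trB (P / dim S)` and a point of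
`DB S`, so it has a preimage `ρ` positive definite on `S`. Replace `T` by a nonzero Hermitian `H` (`T + Tᴴ` or `i T`), still supported on `S` with
`trB H = 0`. Every `ρ + t H` then has trace one, support in `S` and partial trace `Q`, and
since `H` is traceless its quadratic form takes both signs, so the `t` with `ρ + t H ⪰ 0` form
a compact interval with `0` in its interior. Positive definiteness on `S` is an open condition,
so it fails at both endpoints, which therefore have a kernel vector in `S`: their rank is below
`dim S`.
-/

open scoped ComplexOrder

noncomputable section

/-- Partial trace over the second factor. -/
def trB {m n : Type*} [Fintype n] (ρ : Matrix (m × n) (m × n) ℂ) : Matrix m m ℂ :=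
  Matrix.of fun i i' => ∑ j, ρ (i, j) (i', j)

/-- Partial trace over the first factor. -/
def trA {m n : Type*} [Fintype m] (ρ : Matrix (m × n) (m × n) ℂ) : Matrix n n ℂ :=
  Matrix.of fun j j' => ∑ i, ρ (i, j) (i, j')

/-- The outer product `|ψ⟩⟨φ|`. -/
def outer {k : Type*} (ψ φ : k → ℂ) : Matrix k k ℂ :=
  Matrix.of fun x y => ψ x * (starRingEnd ℂ) (φ y)

/-- A density matrix: positive semidefinite with trace one. -/
def IsDensity {k : Type*} [Fintype k] (ρ : Matrix k k ℂ) : Prop :=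
  ρ.PosSemidef ∧ ρ.trace = 1

/-- `P` is the matrix of the orthogonal projection onto the submodule `S`. -/
def IsOrthProjOnto {k : Type*} [Fintype k] (S : Submodule ℂ (k → ℂ)) (P : Matrix k k ℂ) : Prop :=
  P.IsHermitian ∧ P * P = P ∧ (∀ x, P.mulVec x ∈ S) ∧ ∀ y ∈ S, P.mulVec y = y

/-- `T` is supported on `S`: `P * T * P = T` for the orthogonal projection `P` onto `S`. -/
def SupportedOn {k : Type*} [Fintype k] (S : Submodule ℂ (k → ℂ)) (T : Matrix k k ℂ) : Prop :=
  ∃ P, IsOrthProjOnto S P ∧ P * T * P = T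

/-- The set of reduced density matrices on the first factor. -/
def DB {m n : Type*} [Fintype m] [Fintype n] (S : Submodule ℂ (m × n → ℂ)) :
    Set (Matrix m m ℂ) :=
  {σ | ∃ ρ, IsDensity ρ ∧ SupportedOn S ρ ∧ trB ρ = σ}

open Matrix

section PosSemidef

variable {k : Type*} [Fintype k]

lemma Matrix.IsHermitian.posSemidef_iff_re_nonneg {A : Matrix k k ℂ} (hA : A.IsHermitian) :
    A.PosSemidef ↔ ∀ x, 0 ≤ (star x ⬝ᵥ A *ᵥ x).re := by
  refine ⟨fun h x => h.re_dotProduct_nonneg x, fun h => .of_dotProduct_mulVec_nonneg hA fun x => ?_⟩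
  exact Complex.nonneg_iff.mpr ⟨h x, (hA.im_star_dotProduct_mulVec_self x).symm⟩

lemma isClosed_setOf_posSemidef : IsClosed {A : Matrix k k ℂ | A.PosSemidef} := by
  have : {A : Matrix k k ℂ | A.PosSemidef} =
      {A | Aᴴ = A} ∩ ⋂ x : k → ℂ, {A | 0 ≤ (star x ⬝ᵥ A *ᵥ x).re} := by
    ext A
    simp only [Set.mem_ofPred_eq, Set.mem_inter_iff, Set.mem_iInter]
    exact ⟨fun h => ⟨h.1, h.1.posSemidef_iff_re_nonneg.mp h⟩,
      fun h => (IsHermitian.posSemidef_iff_re_nonneg h.1).mpr h.2⟩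
  rw [this]
  refine (isClosed_eq continuous_id.matrix_conjTranspose continuous_id).inter
    (isClosed_iInter fun x => isClosed_le continuous_const ?_)
  simp only [dotProduct, mulVec]
  fun_prop

lemma Matrix.IsHermitian.exists_re_dotProduct_mulVec_neg {H : Matrix k k ℂ} (hH : H.IsHermitian)
    (htr : H.trace = 0) (hH0 : H ≠ 0) : ∃ x, (star x ⬝ᵥ H *ᵥ x).re < 0 := by
  by_contra! h
  exact hH0 ((hH.posSemidef_iff_re_nonneg.mpr h).trace_eq_zero_iff.mp htr)

lemma convex_setOf_isDensity : Convex ℝ {ρ : Matrix k k ℂ | IsDensity ρ} := by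
  rintro ρ ⟨hρ, hρtr⟩ σ ⟨hσ, hσtr⟩ a b ha hb hab
  refine ⟨(hρ.smul ha).add (hσ.smul hb), ?_⟩
  rw [trace_add, trace_smul, trace_smul, hρtr, hσtr, ← add_smul, hab, one_smul]

end PosSemidef

section OrthProj

variable {k : Type*} [Fintype k] {S : Submodule ℂ (k → ℂ)} {P : Matrix k k ℂ}

lemma IsOrthProjOnto.eq {P' : Matrix k k ℂ} (hP : IsOrthProjOnto S P)
    (hP' : IsOrthProjOnto S P') : P = P' := by
  classical
  have hfix {R R'} (hR : IsOrthProjOnto S R) (hR' : IsOrthProjOnto S R') : R' * R = R :=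
    ext_of_mulVec_single fun j => by rw [← mulVec_mulVec, hR'.2.2.2 _ (hR.2.2.1 _)]
  calc P = (P' * P)ᴴ := by rw [hfix hP hP', hP.1.eq]
    _ = P * P' := by rw [conjTranspose_mul, hP.1.eq, hP'.1.eq]
    _ = P' := hfix hP' hP

lemma IsOrthProjOnto.isProj (hP : IsOrthProjOnto S P) : LinearMap.IsProj S P.mulVecLin :=
  ⟨hP.2.2.1, hP.2.2.2⟩

lemma IsOrthProjOnto.trace_eq (hP : IsOrthProjOnto S P) : P.trace = Module.finrank ℂ S := by
  classical
  rw [← hP.isProj.trace, ← Matrix.toLin'_apply',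
    LinearMap.trace_eq_matrix_trace ℂ (Pi.basisFun ℂ k), LinearMap.toMatrix_eq_toMatrix',
    LinearMap.toMatrix'_toLin']

lemma IsOrthProjOnto.posSemidef (hP : IsOrthProjOnto S P) : P.PosSemidef := by
  simpa only [hP.1.eq, hP.2.1] using posSemidef_conjTranspose_mul_self P

lemma IsOrthProjOnto.dotProduct_mulVec_conj (hP : IsOrthProjOnto S P) (A : Matrix k k ℂ)
    (x : k → ℂ) : star x ⬝ᵥ (P * A * P) *ᵥ x = star (P *ᵥ x) ⬝ᵥ A *ᵥ (P *ᵥ x) := by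
  rw [star_mulVec, ← mulVec_mulVec, dotProduct_mulVec, hP.1.eq, ← vecMul_vecMul,
    ← dotProduct_mulVec, ← dotProduct_mulVec, mulVec_mulVec]

lemma IsOrthProjOnto.rank_lt_finrank {A : Matrix k k ℂ} (hP : IsOrthProjOnto S P)
    (hAP : A * P = A) {v : k → ℂ} (hv : v ∈ S) (hv0 : v ≠ 0) (hAv : A *ᵥ v = 0) :
    A.rank < Module.finrank ℂ S := by
  set f := A.mulVecLin.domRestrict S
  have hrange : LinearMap.range A.mulVecLin ≤ LinearMap.range f := by
    rintro _ ⟨x, rfl⟩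
    exact ⟨⟨P *ᵥ x, hP.isProj.map_mem x⟩, by simp [f, mulVec_mulVec, hAP]⟩
  have hker : 0 < Module.finrank ℂ (LinearMap.ker f) :=
    Module.finrank_pos_iff_exists_ne_zero.mpr
      ⟨(⟨⟨v, hv⟩, by simpa [f] using hAv⟩ : LinearMap.ker f), by simpa using hv0⟩
  have := f.finrank_range_add_finrank_ker
  exact lt_of_le_of_lt (Submodule.finrank_mono hrange) (by omega)

end OrthProj

section PosDefOn

variable {k : Type*} [Fintype k] {S : Submodule ℂ (k → ℂ)} {P A B : Matrix k k ℂ}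

def PosDefOn (S : Submodule ℂ (k → ℂ)) (A : Matrix k k ℂ) : Prop :=
  ∀ v ∈ S, v ≠ 0 → 0 < (star v ⬝ᵥ A *ᵥ v).re

lemma re_dotProduct_mulVec_smul (A : Matrix k k ℂ) (c : ℂ) (v : k → ℂ) :
    (star (c • v) ⬝ᵥ A *ᵥ (c • v)).re = ‖c‖ ^ 2 * (star v ⬝ᵥ A *ᵥ v).re := by
  rw [star_smul, mulVec_smul, smul_dotProduct, dotProduct_smul, smul_smul, smul_eq_mul,
    Complex.star_def, Complex.conj_mul', ← Complex.ofReal_pow, Complex.re_ofReal_mul]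

lemma posDefOn_iff_forall_sphere :
    PosDefOn S A ↔ ∀ u ∈ (S : Set (k → ℂ)) ∩ Metric.sphere 0 1, 0 < (star u ⬝ᵥ A *ᵥ u).re := by
  refine ⟨fun h u ⟨huS, hu⟩ => h u huS (ne_zero_of_mem_unit_sphere ⟨u, hu⟩), fun h v hv hv0 => ?_⟩
  have hv0' : (‖v‖ : ℂ) ≠ 0 := by exact_mod_cast norm_ne_zero_iff.mpr hv0
  have hu := h ((‖v‖ : ℂ)⁻¹ • v) ⟨S.smul_mem _ hv, by simp [norm_smul, hv0]⟩
  rw [re_dotProduct_mulVec_smul] at hu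
  exact pos_of_mul_pos_right hu (by positivity)

lemma isOpen_setOf_posDefOn (S : Submodule ℂ (k → ℂ)) :
    IsOpen {A : Matrix k k ℂ | PosDefOn S A} := by
  simp_rw [isOpen_iff_eventually, Set.mem_ofPred_eq, posDefOn_iff_forall_sphere]
  intro A hA
  have hK : IsCompact ((S : Set (k → ℂ)) ∩ Metric.sphere 0 1) :=
    (isCompact_sphere 0 1).inter_left S.closed_of_finiteDimensional
  refine hK.eventually_forall_of_forall_eventually fun u hu => ?_
  have hcont : Continuous fun p : Matrix k k ℂ × (k → ℂ) => (star p.2 ⬝ᵥ p.1 *ᵥ p.2).re := by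
    simp only [dotProduct, mulVec]
    fun_prop
  exact hcont.continuousAt.eventually (eventually_gt_nhds (hA u hu))

lemma PosDefOn.smul (h : PosDefOn S A) {c : ℝ} (hc : 0 < c) : PosDefOn S (c • A) := by
  intro v hv hv0
  rw [smul_mulVec, dotProduct_smul, Complex.real_smul, Complex.re_ofReal_mul]
  exact mul_pos hc (h v hv hv0)

lemma PosDefOn.add_posSemidef (hA : PosDefOn S A) (hB : B.PosSemidef) : PosDefOn S (A + B) := by
  intro v hv hv0
  rw [add_mulVec, dotProduct_add, Complex.add_re]
  exact add_pos_of_pos_of_nonneg (hA v hv hv0) (hB.re_dotProduct_nonneg v)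

lemma IsOrthProjOnto.posDefOn (hP : IsOrthProjOnto S P) : PosDefOn S P := by
  intro v hv hv0
  have hPv : P *ᵥ v = v := hP.isProj.map_id v hv
  rw [hPv]
  exact (Complex.pos_iff.mp (dotProduct_star_self_pos_iff.mpr hv0)).1

lemma PosDefOn.posSemidef (hP : IsOrthProjOnto S P) (hA : A.IsHermitian) (hAP : P * A * P = A)
    (h : PosDefOn S A) : A.PosSemidef := by
  refine hA.posSemidef_iff_re_nonneg.mpr fun x => ?_
  rw [← hAP, hP.dotProduct_mulVec_conj]
  by_cases hx : P *ᵥ x = 0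
  · simp [hx]
  · exact (h _ (hP.isProj.map_mem x) hx).le

lemma rank_lt_finrank_of_not_posDefOn (hP : IsOrthProjOnto S P) (hA : A.PosSemidef)
    (hAP : P * A * P = A) (h : ¬ PosDefOn S A) : A.rank < Module.finrank ℂ S := by
  obtain ⟨v, hv, hv0, hle⟩ : ∃ v ∈ S, v ≠ 0 ∧ (star v ⬝ᵥ A *ᵥ v).re ≤ 0 := by
    simpa [PosDefOn] using h
  have hqf : star v ⬝ᵥ A *ᵥ v = 0 :=
    Complex.ext (le_antisymm hle (hA.re_dotProduct_nonneg v))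
      (hA.1.im_star_dotProduct_mulVec_self v)
  refine hP.rank_lt_finrank ?_ hv hv0 ((hA.dotProduct_mulVec_zero_iff v).mp hqf)
  conv_lhs => rw [← hAP]
  rw [Matrix.mul_assoc, hP.2.1, hAP]

end PosDefOn

section Boundary

variable {k : Type*} [Fintype k] {S : Submodule ℂ (k → ℂ)} {P ρ H : Matrix k k ℂ}

lemma exists_pos_posSemidef_not_posDefOn (hP : IsOrthProjOnto S P) (hρ : ρ.IsHermitian)
    (hρP : P * ρ * P = ρ) (hpos : PosDefOn S ρ) (hH : H.IsHermitian) (hHP : P * H * P = H)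
    {x : k → ℂ} (hx : (star x ⬝ᵥ H *ᵥ x).re < 0) :
    ∃ t : ℝ, 0 < t ∧ (ρ + t • H).PosSemidef ∧ ¬ PosDefOn S (ρ + t • H) := by
  have hline : Continuous fun t : ℝ => ρ + t • H := by fun_prop
  set K := {t : ℝ | (ρ + t • H).PosSemidef}
  set U := {t : ℝ | PosDefOn S (ρ + t • H)}
  have hK : IsClosed K := isClosed_setOf_posSemidef.preimage hline
  have hU : IsOpen U := (isOpen_setOf_posDefOn S).preimage hline
  have hUK : U ⊆ K := fun t ht => ht.posSemidef hP (hρ.add (hH.smul (IsSelfAdjoint.all t)))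
    (by simp [Matrix.mul_add, Matrix.add_mul, hρP, hHP])
  have h0U : (0 : ℝ) ∈ U := by simpa [U] using hpos
  have hbdd : BddAbove K := by
    refine ⟨(star x ⬝ᵥ ρ *ᵥ x).re / -(star x ⬝ᵥ H *ᵥ x).re, fun t ht => ?_⟩
    have := ht.re_dotProduct_nonneg x
    simp only [add_mulVec, smul_mulVec, dotProduct_add, dotProduct_smul, RCLike.re_to_complex,
      Complex.add_re, Complex.real_smul, Complex.re_ofReal_mul] at this
    rw [le_div_iff₀ (neg_pos.mpr hx)]
    linarith
  have hsup : sSup K ∈ K := hK.csSup_mem ⟨0, hUK h0U⟩ hbdd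
  obtain ⟨s, hs, hsU⟩ := Filter.Eventually.exists_gt (hU.mem_nhds h0U)
  refine ⟨sSup K, hs.trans_le (le_csSup hbdd (hUK hsU)), hsup, fun hsupU => ?_⟩
  obtain ⟨s', hs', hs'U⟩ := Filter.Eventually.exists_gt (hU.mem_nhds hsupU)
  exact hs'.not_ge (le_csSup hbdd (hUK hs'U))

end Boundary

lemma exists_mem_openSegment_of_mem_intrinsicInterior {E : Type*} [AddCommGroup E] [Module ℝ E]
    [TopologicalSpace E] [IsTopologicalAddGroup E] [ContinuousSMul ℝ E] {s : Set E} {x y : E}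
    (hx : x ∈ intrinsicInterior ℝ s) (hy : y ∈ s) : ∃ z ∈ s, x ∈ openSegment ℝ y z := by
  obtain ⟨x', hx', rfl⟩ := mem_intrinsicInterior.mp hx
  have hline : ∀ t : ℝ, AffineMap.lineMap y (x' : E) t ∈ affineSpan ℝ s := fun t =>
    AffineMap.lineMap_mem _ (subset_affineSpan ℝ s hy) x'.2
  let f : ℝ → affineSpan ℝ s := fun t => ⟨AffineMap.lineMap y (x' : E) t, hline t⟩
  have hf : Continuous f := by fun_prop
  have h1 : (1 : ℝ) ∈ f ⁻¹' interior ((↑) ⁻¹' s) := by simpa [f] using hx'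
  obtain ⟨t, ht, htU⟩ := Filter.Eventually.exists_gt ((isOpen_interior.preimage hf).mem_nhds h1)
  refine ⟨AffineMap.lineMap y (x' : E) t, (interior_subset htU : f t ∈ (↑) ⁻¹' s), ?_⟩
  rw [openSegment_eq_image_lineMap]
  refine ⟨t⁻¹, ⟨by positivity, inv_lt_one_of_one_lt₀ ht⟩, ?_⟩
  rw [AffineMap.lineMap_lineMap_right, inv_mul_cancel₀ (by positivity), AffineMap.lineMap_apply_one]

section PartialTrace

variable {m n : Type*} [Fintype n]

lemma trB_add (A B : Matrix (m × n) (m × n) ℂ) : trB (A + B) = trB A + trB B := by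
  ext i i'
  simp [trB, Finset.sum_add_distrib]

lemma trB_smul {R : Type*} [Monoid R] [DistribMulAction R ℂ] (c : R)
    (A : Matrix (m × n) (m × n) ℂ) : trB (c • A) = c • trB A := by
  ext i i'
  simp [trB, Finset.smul_sum]

lemma trB_conjTranspose (A : Matrix (m × n) (m × n) ℂ) : trB Aᴴ = (trB A)ᴴ := by
  ext i i'
  simp [trB, conjTranspose_apply]

lemma trace_trB [Fintype m] (A : Matrix (m × n) (m × n) ℂ) : (trB A).trace = A.trace := by
  simp [trB, Matrix.trace, Fintype.sum_prod_type]

end PartialTrace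

section Preimages

variable {m n : Type*} [Fintype m] [Fintype n] {S : Submodule ℂ (m × n → ℂ)}
  {P : Matrix (m × n) (m × n) ℂ}

lemma exists_isHermitian_ne_zero_trB_eq_zero {P T : Matrix (m × n) (m × n) ℂ}
    (hP : P.IsHermitian) (hT0 : T ≠ 0) (hTP : P * T * P = T) (hT : trB T = 0) :
    ∃ H, H.IsHermitian ∧ H ≠ 0 ∧ P * H * P = H ∧ trB H = 0 := by
  by_cases h : T + Tᴴ = 0
  · have hTstar : Tᴴ = -T := eq_neg_of_add_eq_zero_right h
    refine ⟨Complex.I • T, ?_, smul_ne_zero Complex.I_ne_zero hT0, by simp [hTP],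
      by simp [trB_smul, hT]⟩
    rw [IsHermitian, conjTranspose_smul, hTstar, Complex.star_def, Complex.conj_I, neg_smul_neg]
  · have hTPstar : P * Tᴴ * P = Tᴴ := by
      simpa [conjTranspose_mul, hP.eq, Matrix.mul_assoc] using congrArg conjTranspose hTP
    exact ⟨T + Tᴴ, isHermitian_add_transpose_self T, h,
      by simp [Matrix.mul_add, Matrix.add_mul, hTP, hTPstar],
      by simp [trB_add, trB_conjTranspose, hT]⟩

lemma exists_posDefOn_preimage (hP : IsOrthProjOnto S P) (hS : Module.finrank ℂ S ≠ 0)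
    {Q : Matrix m m ℂ} (hQ : Q ∈ intrinsicInterior ℝ (DB S)) :
    ∃ ρ, IsDensity ρ ∧ P * ρ * P = ρ ∧ trB ρ = Q ∧ PosDefOn S ρ := by
  set ρ₀ := (Module.finrank ℂ S : ℝ)⁻¹ • P
  have hρ₀ : IsDensity ρ₀ := ⟨hP.posSemidef.smul (by positivity), by
    rw [trace_smul, hP.trace_eq, Complex.real_smul]
    push_cast
    exact inv_mul_cancel₀ (by exact_mod_cast hS)⟩
  have hρ₀P : P * ρ₀ * P = ρ₀ := by simp [ρ₀, hP.2.1]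
  obtain ⟨_, ⟨ρ₁, hρ₁, ⟨P', hP', hρ₁P⟩, rfl⟩, a, b, ha, hb, hab, rfl⟩ :=
    exists_mem_openSegment_of_mem_intrinsicInterior hQ ⟨ρ₀, hρ₀, ⟨P, hP, hρ₀P⟩, rfl⟩
  rw [hP'.eq hP] at hρ₁P
  refine ⟨a • ρ₀ + b • ρ₁, convex_setOf_isDensity hρ₀ hρ₁ ha.le hb.le hab,
    by simp [Matrix.mul_add, Matrix.add_mul, hρ₀P, hρ₁P], by simp [trB_add, trB_smul], ?_⟩
  exact ((hP.posDefOn.smul (by positivity)).smul ha).add_posSemidef (hρ₁.1.smul hb.le)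

lemma exists_preimage_rank_lt_finrank {ρ H : Matrix (m × n) (m × n) ℂ} (hP : IsOrthProjOnto S P)
    (hρ : IsDensity ρ) (hρP : P * ρ * P = ρ) (hpos : PosDefOn S ρ) (hH : H.IsHermitian)
    (hHP : P * H * P = H) (hHtr : trB H = 0) {x : m × n → ℂ} (hx : (star x ⬝ᵥ H *ᵥ x).re < 0) :
    ∃ t : ℝ, 0 < t ∧ IsDensity (ρ + t • H) ∧ SupportedOn S (ρ + t • H) ∧
      trB (ρ + t • H) = trB ρ ∧ (ρ + t • H).rank < Module.finrank ℂ S := by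
  obtain ⟨t, ht, hpsd, hnot⟩ :=
    exists_pos_posSemidef_not_posDefOn hP hρ.1.isHermitian hρP hpos hH hHP hx
  have hsupp : P * (ρ + t • H) * P = ρ + t • H := by
    simp [Matrix.mul_add, Matrix.add_mul, hρP, hHP]
  refine ⟨t, ht, ⟨hpsd, ?_⟩, ⟨P, hP, hsupp⟩, by simp [trB_add, trB_smul, hHtr],
    rank_lt_finrank_of_not_posDefOn hP hpsd hsupp hnot⟩
  rw [trace_add, trace_smul, ← trace_trB H, hHtr, trace_zero, smul_zero, add_zero, hρ.2]

end Preimages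

theorem interior_points_have_nonunique_preimages_general
    {m n : Type*} [Fintype m] [Fintype n]
    (S : Submodule ℂ (m × n → ℂ))
    (T : Matrix (m × n) (m × n) ℂ) (hT0 : T ≠ 0)
    (hTS : SupportedOn S T) (hTtr : trB T = 0)
    (Q : Matrix m m ℂ) (hQ : Q ∈ intrinsicInterior ℝ (DB S)) :
    ∃ ρ1 ρ2 : Matrix (m × n) (m × n) ℂ, ρ1 ≠ ρ2 ∧
      IsDensity ρ1 ∧ SupportedOn S ρ1 ∧ IsDensity ρ2 ∧ SupportedOn S ρ2 ∧
      trB ρ1 = Q ∧ trB ρ2 = Q ∧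
      ρ1.rank < Module.finrank ℂ S ∧ ρ2.rank < Module.finrank ℂ S := by
  obtain ⟨P, hP, hTP⟩ := hTS
  have hS : Module.finrank ℂ S ≠ 0 := fun h => hT0 <| by
    rw [← hTP, hP.posSemidef.trace_eq_zero_iff.mp (by simp [hP.trace_eq, h]), zero_mul, zero_mul]
  obtain ⟨ρ, hρ, hρP, rfl, hpos⟩ := exists_posDefOn_preimage hP hS hQ
  obtain ⟨H, hH, hH0, hHP, hHtr⟩ := exists_isHermitian_ne_zero_trB_eq_zero hP.1 hT0 hTP hTtr
  have htr : H.trace = 0 := by rw [← trace_trB, hHtr, trace_zero]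
  obtain ⟨x₁, hx₁⟩ := hH.exists_re_dotProduct_mulVec_neg htr hH0
  obtain ⟨x₂, hx₂⟩ := hH.neg.exists_re_dotProduct_mulVec_neg (by simp [htr]) (neg_ne_zero.mpr hH0)
  obtain ⟨t₁, ht₁, hρ₁, hS₁, hQ₁, hrank₁⟩ :=
    exists_preimage_rank_lt_finrank hP hρ hρP hpos hH hHP hHtr hx₁
  obtain ⟨t₂, ht₂, hρ₂, hS₂, hQ₂, hrank₂⟩ := exists_preimage_rank_lt_finrank hP hρ hρP hpos hH.neg
    (by simp [hHP]) (by rw [← neg_one_smul ℂ H, trB_smul, hHtr, smul_zero]) hx₂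
  refine ⟨_, _, fun h => hH0 ?_, hρ₁, hS₁, hρ₂, hS₂, hQ₁, hQ₂, hrank₁, hrank₂⟩
  have : (t₁ + t₂) • H = 0 := by rw [add_smul, add_left_cancel h, smul_neg, neg_add_cancel]
  exact (smul_eq_zero.mp this).resolve_left (by positivity)

theorem interior_points_have_nonunique_preimages
    {m n : Type*} [Fintype m] [Fintype n] [DecidableEq m] [DecidableEq n]
    (S : Submodule ℂ (m × n → ℂ))
    (T : Matrix (m × n) (m × n) ℂ) (hT0 : T ≠ 0)
    (hTS : SupportedOn S T) (hTtr : trB T = 0)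
    (Q : Matrix m m ℂ) (hQ : Q ∈ intrinsicInterior ℝ (DB S)) :
    ∃ ρ1 ρ2 : Matrix (m × n) (m × n) ℂ, ρ1 ≠ ρ2 ∧
      IsDensity ρ1 ∧ SupportedOn S ρ1 ∧ IsDensity ρ2 ∧ SupportedOn S ρ2 ∧
      trB ρ1 = Q ∧ trB ρ2 = Q ∧
      ρ1.rank < Module.finrank ℂ S ∧ ρ2.rank < Module.finrank ℂ S :=
  interior_points_have_nonunique_preimages_general S T hT0 hTS hTtr Q hQ

end
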